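/- arXiv:2010.09591 — 2 statements merged into one kernel-verified Lean document; each statement's English description precedes it below -/
import Mathlib

section
/- Let D1 ⊆ ℝ^m be a nonempty compact set, D2 ⊆ ℝ^k a nonempty set, s : ℝ^m → ℝ a continuous function, and F : ℝ × ℝ^k → ℝ such that for every v ∈ D2 the map t ↦ F(t, v) is monotone nonincreasing on the interval [min_{u∈D1} s(u), max_{u∈D1} s(u)]. Let s* = max_{u∈D1} s(u). Then the infimum over D1 × D2 of the structurally separable function f(u,v) = F(s(u), v) equals the infimum over D2 of v ↦ F(s*, v). -/
theorem sInf_image_prod_eq_of_isGreatest_of_antitoneOn {X Y α β : Type*} [Preorder α]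
    [ConditionallyCompleteLinearOrder β] {S : Set X} {T : Set Y} {g : X → α} {F : α → Y → β}
    {a : α} (ha : IsGreatest (g '' S) a) (hF : ∀ v ∈ T, AntitoneOn (F · v) (g '' S)) :
    sInf ((fun p : X × Y => F (g p.1) p.2) '' S ×ˢ T) = sInf (F a '' T) := by
  obtain ⟨⟨u₀, hu₀, rfl⟩, hle⟩ := ha
  apply csInf_eq_csInf_of_forall_exists_le
  · rintro _ ⟨⟨u, v⟩, ⟨hu, hv⟩, rfl⟩
    exact ⟨F (g u₀) v, ⟨v, hv, rfl⟩,
      hF v hv (Set.mem_image_of_mem g hu) (Set.mem_image_of_mem g hu₀) (hle (Set.mem_image_of_mem g hu))⟩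
  · rintro _ ⟨v, hv, rfl⟩
    exact ⟨F (g u₀) v, ⟨(u₀, v), ⟨hu₀, hv⟩, rfl⟩, le_rfl⟩

theorem subdomain_separability_decreasing_general
    (m k : ℕ) (D1 : Set (Fin m → ℝ)) (D2 : Set (Fin k → ℝ))
    (hD1c : IsCompact D1) (hD1 : D1.Nonempty)
    (s : (Fin m → ℝ) → ℝ) (hs : Continuous s)
    (F : ℝ → (Fin k → ℝ) → ℝ)
    (hmono : ∀ v ∈ D2, ∀ t1 ∈ Set.Icc (sInf (s '' D1)) (sSup (s '' D1)),
      ∀ t2 ∈ Set.Icc (sInf (s '' D1)) (sSup (s '' D1)), t1 ≤ t2 → F t2 v ≤ F t1 v) :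
    sInf ((fun p : (Fin m → ℝ) × (Fin k → ℝ) => F (s p.1) p.2) '' (D1 ×ˢ D2))
      = sInf ((fun v => F (sSup (s '' D1)) v) '' D2) := by
  have hcompact : IsCompact (s '' D1) := hD1c.image hs
  have hIcc : s '' D1 ⊆ Set.Icc (sInf (s '' D1)) (sSup (s '' D1)) :=
    hcompact.isBounded.subset_Icc_sInf_sSup
  exact sInf_image_prod_eq_of_isGreatest_of_antitoneOn (hcompact.isGreatest_sSup (hD1.image s))
    fun v hv => AntitoneOn.mono (hmono v hv) hIcc

/-- Decreasing case of Theorem 1 (subdomain separability): for a structurally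
separable objective `f(u,v) = F(s(u), v)` that is monotone nonincreasing in the
separator value on the range of `s` over `D1`, the global infimum over
`D1 ×ˢ D2` equals the infimum over `D2` of `F(s*, ·)` where
`s* = max_{u ∈ D1} s(u)`. -/
theorem subdomain_separability_decreasing
    (m k : ℕ) (D1 : Set (Fin m → ℝ)) (D2 : Set (Fin k → ℝ))
    (hD1c : IsCompact D1) (hD1 : D1.Nonempty) (hD2 : D2.Nonempty)
    (s : (Fin m → ℝ) → ℝ) (hs : Continuous s)
    (F : ℝ → (Fin k → ℝ) → ℝ)
    (hmono : ∀ v ∈ D2, ∀ t1 ∈ Set.Icc (sInf (s '' D1)) (sSup (s '' D1)),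
      ∀ t2 ∈ Set.Icc (sInf (s '' D1)) (sSup (s '' D1)), t1 ≤ t2 → F t2 v ≤ F t1 v) :
    sInf ((fun p : (Fin m → ℝ) × (Fin k → ℝ) => F (s p.1) p.2) '' (D1 ×ˢ D2))
      = sInf ((fun v => F (sSup (s '' D1)) v) '' D2) :=
  subdomain_separability_decreasing_general m k D1 D2 hD1c hD1 s hs F hmono
end

section
/- Let D_i = [a_i, b_i] ⊆ ℝ, i = 0,…,n-1, be nonempty compact intervals. For x ∈ ∏_i D_i define f(x) = y_n via y_0 = 1, y_{i+1} = exp(x_i^2 + y_i - 1). Define the sequential recursion ŷ_0 = 1 and ŷ_{i+1} = min_{t ∈ D_i} exp(t^2 + ŷ_i - 1). Then the minimum of f over ∏_i D_i equals ŷ_n. -/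
/-
Since `exp` is increasing, `yᵢ₊₁` is increasing both in `xᵢ²` and in `yᵢ`, so by induction
`y` is monotone in the vector of squares `(xᵢ²)ᵢ`. Choosing each `xᵢ` to minimize `t²` on
`[aᵢ, bᵢ]` therefore minimizes every `yᵢ` simultaneously, and for this choice the recursion
for `y` is exactly the sequential recursion for `ŷ`.
-/

/-- The intermediate values `yᵢ` of the recursive exponential program:
`y₀ = 1` and `y_{i+1} = exp(xᵢ² + yᵢ - 1)` for `i < n`. -/
noncomputable def recExpSeq (n : ℕ) (x : Fin n → ℝ) : ℕ → ℝ
  | 0 => 1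
  | i + 1 =>
      if h : i < n then Real.exp (x ⟨i, h⟩ ^ 2 + recExpSeq n x i - 1)
      else recExpSeq n x i

open Set Real

lemma recExpSeq_succ (n : ℕ) (x : Fin n → ℝ) (i : Fin n) :
    recExpSeq n x (i + 1) = exp (x i ^ 2 + recExpSeq n x i - 1) := by
  simp [recExpSeq, i.isLt]

lemma recExpSeq_le_of_sq_le {n : ℕ} {x x' : Fin n → ℝ} (h : ∀ i, x i ^ 2 ≤ x' i ^ 2) :
    ∀ k, recExpSeq n x k ≤ recExpSeq n x' k
  | 0 => le_rfl
  | k + 1 => by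
    have ih := recExpSeq_le_of_sq_le h k
    by_cases hk : k < n
    · rw [recExpSeq_succ n x ⟨k, hk⟩, recExpSeq_succ n x' ⟨k, hk⟩]
      exact exp_le_exp.2 (by linarith [h ⟨k, hk⟩])
    · simpa [recExpSeq, hk] using ih

lemma recExpSeq_eq_of_recursion {n : ℕ} {x : Fin n → ℝ} {y : ℕ → ℝ} (h0 : y 0 = 1)
    (hsucc : ∀ i : Fin n, y (i + 1) = exp (x i ^ 2 + y i - 1)) :
    ∀ k ≤ n, recExpSeq n x k = y k
  | 0, _ => h0.symm
  | k + 1, hk => by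
    rw [recExpSeq_succ n x ⟨k, hk⟩, hsucc ⟨k, hk⟩,
      recExpSeq_eq_of_recursion h0 hsucc k (Nat.le_of_succ_le hk)]

lemma sInf_image_exp_sq_add_eq {s : Set ℝ} {t₀ : ℝ} (ht₀ : t₀ ∈ s)
    (hmin : IsMinOn (· ^ 2) s t₀) (c : ℝ) :
    sInf ((fun t => exp (t ^ 2 + c - 1)) '' s) = exp (t₀ ^ 2 + c - 1) := by
  refine IsLeast.csInf_eq ⟨mem_image_of_mem _ ht₀, ?_⟩
  rintro _ ⟨t, ht, rfl⟩
  exact exp_le_exp.2 (by linarith [isMinOn_iff.1 hmin t ht])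

/-- Sequential decomposition of the global minimization of the recursive
exponential function `f(x) = yₙ` over a box `∏ᵢ [aᵢ, bᵢ]`: with `ŷ₀ = 1` and
`ŷ_{i+1} = min_{t ∈ [aᵢ, bᵢ]} exp(t² + ŷᵢ - 1)`, the minimum of `f` over the
box equals `ŷₙ`. -/
theorem recursive_exponential_sequential_decomposition
    (n : ℕ) (a b : Fin n → ℝ) (hab : ∀ i, a i ≤ b i)
    (yhat : ℕ → ℝ) (h0 : yhat 0 = 1)
    (hs : ∀ i : Fin n, yhat ((i : ℕ) + 1)
        = sInf ((fun t : ℝ => Real.exp (t ^ 2 + yhat i - 1)) '' Set.Icc (a i) (b i))) :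
    sInf ((fun x : Fin n → ℝ => recExpSeq n x n) ''
        Set.pi Set.univ (fun i => Set.Icc (a i) (b i)))
      = yhat n := by
  choose xs hxs hmin using fun i =>
    isCompact_Icc.exists_isMinOn (nonempty_Icc.2 (hab i)) (continuous_pow 2).continuousOn
  have hxs_yhat : recExpSeq n xs n = yhat n :=
    recExpSeq_eq_of_recursion h0
      (fun i => (hs i).trans (sInf_image_exp_sq_add_eq (hxs i) (hmin i) _)) n le_rfl
  refine IsLeast.csInf_eq ⟨⟨xs, fun i _ => hxs i, hxs_yhat⟩, ?_⟩
  rintro _ ⟨x, hx, rfl⟩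
  rw [← hxs_yhat]
  exact recExpSeq_le_of_sq_le (fun i => isMinOn_iff.1 (hmin i) (x i) (hx i trivial)) n
end
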